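/- arXiv:1711.03869 — 5 statements merged into one kernel-verified Lean document; each statement's English description precedes it below -/
import Mathlib

section
/- Let a > 0, L > 0, k > 0 and suppose 0 ≤ w(x) ≤ a/2 for all x ∈ [0,L], and that M₁ := min{(3/4)·k·a² − a − 1, k − 1} > 0. Then for all functions p, q ∈ L²(0,L) (representing u_t and u_x), the quantity E₁ = ∫₀ᴸ [k·((a² − w(x)²)·q(x)² + p(x)²) − 2·exp(−x/L)·(w(x)·q(x)² + p(x)·q(x))] dx satisfies M₁·∫₀ᴸ (p² + q²) dx ≤ E₁. -/
open Real Set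

theorem E1_lower_bound (a L k : ℝ) (ha : 0 < a) (hL : 0 < L) (hk : 0 < k)
    (w p q : ℝ → ℝ) (hw : ∀ x ∈ Icc (0:ℝ) L, 0 ≤ w x ∧ w x ≤ a / 2)
    (hwc : Continuous w) (hpc : Continuous p) (hqc : Continuous q)
    (M₁ : ℝ) (hM₁ : M₁ = min ((3/4) * k * a ^ 2 - a - 1) (k - 1)) (hM₁pos : 0 < M₁) :
    M₁ * ∫ x in (0:ℝ)..L, (p x ^ 2 + q x ^ 2) ≤
      ∫ x in (0:ℝ)..L,
        (k * ((a ^ 2 - w x ^ 2) * q x ^ 2 + p x ^ 2)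
          - 2 * Real.exp (-x / L) * (w x * q x ^ 2 + p x * q x)) := by
  rw [← intervalIntegral.integral_const_mul]
  apply intervalIntegral.integral_mono_on hL.le
  · exact (continuous_const.mul ((hpc.pow 2).add (hqc.pow 2))).intervalIntegrable _ _
  · apply Continuous.intervalIntegrable
    continuity
  · intro x hx
    obtain ⟨hw0, hwa⟩ := hw x hx
    have hxL : -x / L ≤ 0 :=
      div_nonpos_of_nonpos_of_nonneg (by linarith [hx.1]) hL.le
    have he1 : Real.exp (-x / L) ≤ 1 := Real.exp_le_one_iff.mpr hxL
    have he0 : 0 < Real.exp (-x / L) := Real.exp_pos _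
    have h1 : M₁ ≤ 3/4 * k * a ^ 2 - a - 1 := hM₁ ▸ min_le_left _ _
    have h2 : M₁ ≤ k - 1 := hM₁ ▸ min_le_right _ _
    have hw2 : w x ^ 2 ≤ a ^ 2 / 4 := by nlinarith
    nlinarith [mul_nonneg he0.le (sq_nonneg (p x - q x)),
      mul_nonneg (sub_nonneg.mpr he1) (sq_nonneg (p x) ),
      mul_nonneg (sub_nonneg.mpr he1) (sq_nonneg (q x)),
      mul_nonneg (mul_nonneg (sub_nonneg.mpr he1) hw0) (sq_nonneg (q x)),
      mul_nonneg hk.le (mul_nonneg (sub_nonneg.mpr hw2) (sq_nonneg (q x))),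
      mul_nonneg (mul_nonneg (sub_nonneg.mpr hwa) (by norm_num : (0:ℝ) ≤ 2)) (sq_nonneg (q x)),
      mul_nonneg (sub_nonneg.mpr h2) (sq_nonneg (p x)),
      mul_nonneg (sub_nonneg.mpr h1) (sq_nonneg (q x))]
end

section
/- Under the hypotheses 0 ≤ w ≤ a/2 and M₁ = min{(3/4)·k·a² − a − 1, k − 1} > 0, with K₁ = (1 + 2L²)/M₁, one has ∫₀ᴸ (p² + (1 + 2L²)·q²) dx ≤ K₁·E₁, where E₁ = ∫₀ᴸ [k·((a² − w²)·q² + p²) − 2·exp(−x/L)·(w·q² + p·q)] dx. -/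
open Real Set

lemma E1_pointwise (a k M₁ e W P Q : ℝ) (hk : 0 < k)
    (hW0 : 0 ≤ W) (hWa : W ≤ a / 2)
    (hepos : 0 < e) (he1 : e ≤ 1)
    (h1 : M₁ ≤ (3/4) * k * a ^ 2 - a - 1) (h2 : M₁ ≤ k - 1) :
    M₁ * (P ^ 2 + Q ^ 2) ≤
      k * ((a ^ 2 - W ^ 2) * Q ^ 2 + P ^ 2) - 2 * e * (W * Q ^ 2 + P * Q) := by
  have hq2 := sq_nonneg Q
  have hp2 := sq_nonneg P
  have hA : (3/4) * k * a ^ 2 * Q ^ 2 ≤ k * (a ^ 2 - W ^ 2) * Q ^ 2 := by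
    nlinarith [mul_nonneg hk.le (mul_nonneg (mul_nonneg
      (by linarith : (0:ℝ) ≤ a / 2 - W) (by linarith : (0:ℝ) ≤ a / 2 + W)) hq2)]
  have hB : 2 * e * (W * Q ^ 2) ≤ a * Q ^ 2 := by
    nlinarith [mul_nonneg (sub_nonneg.mpr he1) (mul_nonneg hW0 hq2),
      mul_nonneg (by linarith : (0:ℝ) ≤ a / 2 - W) hq2]
  have hC : 2 * e * (P * Q) ≤ P ^ 2 + Q ^ 2 := by
    have t1 : 0 ≤ e * P ^ 2 - 2 * e * (P * Q) + e * Q ^ 2 := by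
      have := mul_nonneg hepos.le (sq_nonneg (P - Q)); nlinarith
    have t2 : e * P ^ 2 ≤ P ^ 2 := by
      have := mul_nonneg (sub_nonneg.mpr he1) hp2; nlinarith
    have t3 : e * Q ^ 2 ≤ Q ^ 2 := by
      have := mul_nonneg (sub_nonneg.mpr he1) hq2; nlinarith
    linarith
  have hD : M₁ * P ^ 2 ≤ (k - 1) * P ^ 2 := mul_le_mul_of_nonneg_right h2 hp2
  have hE : M₁ * Q ^ 2 ≤ ((3/4) * k * a ^ 2 - a - 1) * Q ^ 2 :=
    mul_le_mul_of_nonneg_right h1 hq2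
  nlinarith [hA, hB, hC, hD, hE]

theorem E1_weighted_lower_bound (a L k : ℝ) (ha : 0 < a) (hL : 0 < L) (hk : 0 < k)
    (w p q : ℝ → ℝ) (hw : ∀ x ∈ Icc (0:ℝ) L, 0 ≤ w x ∧ w x ≤ a / 2)
    (hwc : Continuous w) (hpc : Continuous p) (hqc : Continuous q)
    (M₁ : ℝ) (hM₁ : M₁ = min ((3/4) * k * a ^ 2 - a - 1) (k - 1)) (hM₁pos : 0 < M₁)
    (K₁ : ℝ) (hK₁ : K₁ = (1 + 2 * L ^ 2) / M₁) :
    (∫ x in (0:ℝ)..L, (p x ^ 2 + (1 + 2 * L ^ 2) * q x ^ 2)) ≤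
      K₁ * ∫ x in (0:ℝ)..L,
        (k * ((a ^ 2 - w x ^ 2) * q x ^ 2 + p x ^ 2)
          - 2 * Real.exp (-x / L) * (w x * q x ^ 2 + p x * q x)) := by
  have hK₁pos : 0 < K₁ := by
    rw [hK₁]; positivity
  rw [← intervalIntegral.integral_const_mul]
  apply intervalIntegral.integral_mono_on hL.le
  · exact ((hpc.pow 2).add (continuous_const.mul (hqc.pow 2))).intervalIntegrable 0 L
  · apply Continuous.intervalIntegrable
    continuity
  · intro x hx
    obtain ⟨hw0, hwa⟩ := hw x hx
    set e := Real.exp (-x / L) with he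
    have he1 : e ≤ 1 := by
      rw [he, Real.exp_le_one_iff]
      have h0 : 0 ≤ x / L := div_nonneg hx.1 hL.le
      have : -x / L = -(x / L) := neg_div _ _
      linarith
    have hepos : 0 < e := Real.exp_pos _
    have h1 : M₁ ≤ (3/4) * k * a ^ 2 - a - 1 := hM₁ ▸ min_le_left _ _
    have h2 : M₁ ≤ k - 1 := hM₁ ▸ min_le_right _ _
    have key := E1_pointwise a k M₁ e (w x) (p x) (q x) hk hw0 hwa hepos he1 h1 h2
    have hL2 : (1:ℝ) ≤ 1 + 2 * L ^ 2 := by nlinarith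
    have step1 : p x ^ 2 + (1 + 2 * L ^ 2) * q x ^ 2
        ≤ (1 + 2 * L ^ 2) * (p x ^ 2 + q x ^ 2) := by nlinarith [sq_nonneg (p x)]
    have step2 : (1 + 2 * L ^ 2) * (p x ^ 2 + q x ^ 2) ≤ K₁ *
        (k * ((a ^ 2 - w x ^ 2) * q x ^ 2 + p x ^ 2)
          - 2 * e * (w x * q x ^ 2 + p x * q x)) := by
      rw [hK₁, div_mul_eq_mul_div, le_div_iff₀ hM₁pos]
      calc (1 + 2 * L ^ 2) * (p x ^ 2 + q x ^ 2) * M₁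
          = (1 + 2 * L ^ 2) * (M₁ * (p x ^ 2 + q x ^ 2)) := by ring
        _ ≤ (1 + 2 * L ^ 2) * (k * ((a ^ 2 - w x ^ 2) * q x ^ 2 + p x ^ 2)
            - 2 * e * (w x * q x ^ 2 + p x * q x)) :=
            mul_le_mul_of_nonneg_left key (by positivity)
    linarith
end

section
/- Let a > 0, θ ≥ 0, and σ ∈ {−1, 1}. The function ū(x) = σ·a/√(−W₋₁(−exp(σθx + c₁))), where W₋₁ is the lower real branch of the Lambert W function and c₁ < −1, satisfies the ordinary differential equation ū'(x) = (θ/2)·|ū(x)|·ū(x)²/(a² − ū(x)²) on any interval where the expression −exp(σθx + c₁) lies in (−1/e, 0) and ū(x)² < a². -/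
/-! Write `y = -exp (σ θ x + c₁)` and `w = W y`, so that `ū = σ a / √(-w)`. Differentiating
`w exp w = y` (inverse function theorem, legitimate since `y > -1/e` forces `w ≠ -1`) gives
`w' = σ θ w / (1 + w)`; substituting `-w = a² / ū²` into the derivative of `σ a / √(-w)`
turns it into the right-hand side of the ODE. -/

open Real Set Filter Topology

theorem hasDerivAt_mul_exp (w : ℝ) : HasDerivAt (fun t => t * exp t) ((1 + w) * exp w) w := by
  refine ((hasDerivAt_id w).mul (hasDerivAt_exp w)).congr_deriv ?_
  simp only [id, one_mul]
  ring

theorem hasDerivAt_of_mul_exp_eq {W : ℝ → ℝ} {y : ℝ} (hc : ContinuousAt W y)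
    (hinv : ∀ᶠ z in 𝓝 y, W z * exp (W z) = z) (hw : W y ≠ -1) :
    HasDerivAt W ((1 + W y) * exp (W y))⁻¹ y := by
  refine (hasDerivAt_mul_exp (W y)).of_local_left_inverse hc ?_ hinv
  exact mul_ne_zero (fun h => hw (by linarith)) (exp_ne_zero _)

theorem hasDerivAt_comp_neg_exp_of_mul_exp_eq {W : ℝ → ℝ} {k c x : ℝ}
    (hc : ContinuousAt W (-exp (k * x + c)))
    (hinv : ∀ᶠ z in 𝓝 (-exp (k * x + c)), W z * exp (W z) = z)
    (hw : W (-exp (k * x + c)) ≠ -1) :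
    HasDerivAt (fun t => W (-exp (k * t + c)))
      (k * W (-exp (k * x + c)) / (1 + W (-exp (k * x + c)))) x := by
  have hlin : HasDerivAt (fun t => k * t + c) k x := by
    simpa using ((hasDerivAt_id x).const_mul k).add_const c
  refine ((hasDerivAt_of_mul_exp_eq hc hinv hw).comp x hlin.exp.neg).congr_deriv ?_
  set y := -exp (k * x + c) with hy_def
  have h1w : 1 + W y ≠ 0 := fun h => hw (by linarith)
  have hy : -(exp (k * x + c) * k) = k * (W y * exp (W y)) := by
    rw [hinv.self_of_nhds, hy_def]
    ring
  rw [hy]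
  field_simp

theorem lt_neg_one_of_neg_inv_exp_one_lt_mul_exp {w : ℝ} (hw : w ≤ -1)
    (h : -(1 / exp 1) < w * exp w) : w < -1 := by
  refine hw.lt_of_ne fun hw1 => h.ne' ?_
  rw [hw1, exp_neg]
  field_simp

theorem HasDerivAt.div_sqrt_neg {f : ℝ → ℝ} {f' x : ℝ} (hf : HasDerivAt f f' x) (hx : f x < 0)
    (b : ℝ) : HasDerivAt (fun t => b / √(-f t)) (b * f' / (2 * √(-f x) ^ 3)) x := by
  have hpos : 0 < √(-f x) := sqrt_pos.mpr (neg_pos.mpr hx)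
  have hsqrt : HasDerivAt (fun t => √(-f t)) (-f' / (2 * √(-f x))) x :=
    hf.neg.sqrt (neg_ne_zero.mpr hx.ne)
  refine ((hasDerivAt_const x b).div hsqrt hpos.ne').congr_deriv ?_
  field_simp
  rw [sq_sqrt (by linarith)]
  ring

theorem stationary_velocity_identity {a σ θ w : ℝ} (ha : 0 < a) (hσ : |σ| = 1) (hw : w < -1) :
    σ * a * (σ * θ * w / (1 + w)) / (2 * √(-w) ^ 3)
      = θ / 2 * |σ * a / √(-w)| * (σ * a / √(-w)) ^ 2 / (a ^ 2 - (σ * a / √(-w)) ^ 2) := by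
  obtain ⟨s, hs, rfl⟩ : ∃ s, 1 < s ∧ w = -s ^ 2 :=
    ⟨√(-w), lt_sqrt_of_sq_lt (by linarith), by rw [sq_sqrt (by linarith), neg_neg]⟩
  have hσ2 : σ ^ 2 = 1 := by rw [← sq_abs, hσ, one_pow]
  have hs0 : 0 < s := by linarith
  have h1s : 1 + -s ^ 2 ≠ 0 := by nlinarith
  have hs1 : s ^ 2 - 1 ≠ 0 := by nlinarith
  have hden : a ^ 2 - (σ * a / s) ^ 2 ≠ 0 := by
    rw [div_pow, mul_pow, hσ2, one_mul]
    have : a ^ 2 / s ^ 2 < a ^ 2 := div_lt_self (by positivity) (by nlinarith)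
    linarith
  rw [neg_neg, sqrt_sq hs0.le, abs_div, abs_mul, hσ, abs_of_pos ha, abs_of_pos hs0, one_mul]
  field_simp
  rw [hσ2]
  field_simp
  ring

theorem stationary_state_ode_general (a θ c₁ : ℝ) (ha : 0 < a)
    (σ : ℝ) (hσ : σ = -1 ∨ σ = 1)
    (W : ℝ → ℝ)
    (hW : ∀ y ∈ Ioo (-(1 / Real.exp 1)) 0, W y ≤ -1 ∧ W y * Real.exp (W y) = y)
    (hWc : ContinuousOn W (Ioo (-(1 / Real.exp 1)) 0))
    (ubar : ℝ → ℝ)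
    (hubar : ∀ x, ubar x = σ * a / Real.sqrt (-(W (-Real.exp (σ * θ * x + c₁)))))
    (x : ℝ)
    (hdom : -Real.exp (σ * θ * x + c₁) ∈ Ioo (-(1 / Real.exp 1)) 0) :
    HasDerivAt ubar ((θ / 2) * |ubar x| * ubar x ^ 2 / (a ^ 2 - ubar x ^ 2)) x := by
  obtain ⟨hw1, hwy⟩ := hW _ hdom
  have hw : W (-exp (σ * θ * x + c₁)) < -1 :=
    lt_neg_one_of_neg_inv_exp_one_lt_mul_exp hw1 (hwy.symm ▸ hdom.1)
  have hinv : ∀ᶠ z in 𝓝 (-exp (σ * θ * x + c₁)), W z * exp (W z) = z :=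
    eventually_of_mem (isOpen_Ioo.mem_nhds hdom) fun z hz => (hW z hz).2
  have hWy := hasDerivAt_comp_neg_exp_of_mul_exp_eq (hWc.continuousAt (isOpen_Ioo.mem_nhds hdom))
    hinv hw.ne
  have hσ' : |σ| = 1 := by rcases hσ with rfl | rfl <;> simp
  rw [hubar x, ← stationary_velocity_identity ha hσ' hw, funext hubar]
  exact hWy.div_sqrt_neg (by linarith) (σ * a)

theorem stationary_state_ode (a θ c₁ : ℝ) (ha : 0 < a) (hθ : 0 ≤ θ)
    (σ : ℝ) (hσ : σ = -1 ∨ σ = 1) (hc₁ : c₁ < -1)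
    (W : ℝ → ℝ)
    (hW : ∀ y ∈ Ioo (-(1 / Real.exp 1)) 0, W y ≤ -1 ∧ W y * Real.exp (W y) = y)
    (hWc : ContinuousOn W (Ioo (-(1 / Real.exp 1)) 0))
    (ubar : ℝ → ℝ)
    (hubar : ∀ x, ubar x = σ * a / Real.sqrt (-(W (-Real.exp (σ * θ * x + c₁)))))
    (x : ℝ)
    (hdom : -Real.exp (σ * θ * x + c₁) ∈ Ioo (-(1 / Real.exp 1)) 0)
    (hsub : ubar x ^ 2 < a ^ 2) :
    HasDerivAt ubar ((θ / 2) * |ubar x| * ubar x ^ 2 / (a ^ 2 - ubar x ^ 2)) x :=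
  stationary_state_ode_general a θ c₁ ha σ hσ W hW hWc ubar hubar x hdom
end

section
/- Let a > 0, θ ≥ 0. Suppose the real numbers u, ū, u_x, ū_x, u_t satisfy ū + u ≥ 0, 0 < ū ≤ a/2, and max{|u|, |u_x|, |u_t|, |ū|, |ū_x|} ≤ T_Li with T_Li ≤ 1. Define F = −2·u_t·(u_x + ū_x) − θ·(u + ū)·u_t − 2·u·(u_x + ū_x)² − 4·ū·ū_x·u_x − 2·ū·u_x² − (3/2)·θ·u·(u + 2ū)·(u_x + ū_x) − (3/2)·θ·ū²·u_x − ((2·u·ū + u²)/(a² − ū²))·(2·ū·ū_x² + (3/2)·θ·ū²·ū_x). Then |F| ≤ [18 + 13θ + (8 + 6θ)/a²]·T_Li·(|u| + |u_x| + |u_t|). -/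
set_option maxHeartbeats 1000000 in
theorem F_bound (a θ : ℝ) (ha : 0 < a) (hθ : 0 ≤ θ)
    (u ubar ux ubarx ut TLi : ℝ)
    (hpos : ubar + u ≥ 0) (hubar0 : 0 < ubar) (hubar : ubar ≤ a / 2)
    (hTLi : max (max (max (max |u| |ux|) |ut|) |ubar|) |ubarx| ≤ TLi)
    (hTLi1 : TLi ≤ 1) :
    |(-2 * ut * (ux + ubarx) - θ * (u + ubar) * ut - 2 * u * (ux + ubarx) ^ 2
        - 4 * ubar * ubarx * ux - 2 * ubar * ux ^ 2
        - (3/2) * θ * u * (u + 2 * ubar) * (ux + ubarx)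
        - (3/2) * θ * ubar ^ 2 * ux
        - ((2 * u * ubar + u ^ 2) / (a ^ 2 - ubar ^ 2))
            * (2 * ubar * ubarx ^ 2 + (3/2) * θ * ubar ^ 2 * ubarx))| ≤
      (18 + 13 * θ + (8 + 6 * θ) / a ^ 2) * TLi * (|u| + |ux| + |ut|) := by
  simp only [max_le_iff] at hTLi
  obtain ⟨⟨⟨⟨hu, hux⟩, hut⟩, hub⟩, hubx⟩ := hTLi
  have hT : 0 ≤ TLi := (abs_nonneg u).trans hu
  have hT2 : TLi * TLi ≤ TLi := by nlinarith
  have hd : 3/4 * a^2 ≤ a^2 - ubar^2 := by nlinarith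
  have hd0 : 0 < a^2 - ubar^2 := by nlinarith [sq_nonneg a]
  have hsub : ∀ x y : ℝ, |x - y| ≤ |x| + |y| := fun x y => by
    rw [sub_eq_add_neg]; exact (abs_add_le x (-y)).trans (by rw [abs_neg])
  have hsum2 : |ux + ubarx| ≤ 2 * TLi := (abs_add_le ux ubarx).trans (by linarith)
  have hsumu : |u + ubar| ≤ 2 * TLi := (abs_add_le u ubar).trans (by linarith)
  have hsumu2 : |u + 2 * ubar| ≤ 3 * TLi := (abs_add_le u (2*ubar)).trans (by
    rw [abs_mul]; simp only [Nat.abs_ofNat]; linarith)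
  have h1 : |-2 * ut * (ux + ubarx)| ≤ 4 * (TLi * |ut|) := by
    rw [abs_mul]
    have h0 : |-2 * ut| = 2 * |ut| := by rw [abs_mul]; norm_num
    rw [h0]
    nlinarith [abs_nonneg ut]
  have h2 : |θ * (u + ubar) * ut| ≤ 2 * θ * (TLi * |ut|) := by
    rw [abs_mul, abs_mul, abs_of_nonneg hθ]
    nlinarith [mul_le_mul_of_nonneg_right (mul_le_mul_of_nonneg_left hsumu hθ) (abs_nonneg ut)]
  have h3 : |2 * u * (ux + ubarx) ^ 2| ≤ 8 * (TLi * |u|) := by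
    rw [abs_mul, abs_mul, abs_pow]
    simp only [Nat.abs_ofNat]
    have hs : |ux + ubarx| ^ 2 ≤ 4 * TLi := by
      nlinarith [hsum2, abs_nonneg (ux + ubarx)]
    nlinarith [mul_le_mul_of_nonneg_left hs (abs_nonneg u), hu, abs_nonneg u]
  have h4 : |4 * ubar * ubarx * ux| ≤ 4 * (TLi * |ux|) := by
    rw [abs_mul, abs_mul, abs_mul]
    simp only [Nat.abs_ofNat]
    have hbb : |ubar| * |ubarx| ≤ TLi := le_trans (mul_le_mul hub hubx (abs_nonneg _) hT) hT2
    nlinarith [mul_le_mul_of_nonneg_right hbb (abs_nonneg ux)]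
  have h5 : |2 * ubar * ux ^ 2| ≤ 2 * (TLi * |ux|) := by
    rw [abs_mul, abs_mul, abs_pow]
    simp only [Nat.abs_ofNat]
    have hbx : |ubar| * |ux| ≤ TLi := le_trans (mul_le_mul hub hux (abs_nonneg _) hT) hT2
    nlinarith [mul_le_mul_of_nonneg_right hbx (abs_nonneg ux)]
  have h6 : |(3/2) * θ * u * (u + 2 * ubar) * (ux + ubarx)| ≤ 9 * θ * (TLi * |u|) := by
    rw [abs_mul, abs_mul, abs_mul, abs_mul, abs_of_nonneg hθ]
    have h32 : |(3:ℝ)/2| = 3/2 := by norm_num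
    rw [h32]
    have hp : |u + 2 * ubar| * |ux + ubarx| ≤ 6 * TLi := by
      nlinarith [mul_le_mul hsumu2 hsum2 (abs_nonneg (ux + ubarx)) (by linarith : (0:ℝ) ≤ 3 * TLi)]
    nlinarith [mul_le_mul_of_nonneg_left hp (mul_nonneg hθ (abs_nonneg u)), mul_nonneg hθ (abs_nonneg u)]
  have h7 : |(3/2) * θ * ubar ^ 2 * ux| ≤ (3/2) * θ * (TLi * |ux|) := by
    rw [abs_mul, abs_mul, abs_mul, abs_pow, abs_of_nonneg hθ]
    have h32 : |(3:ℝ)/2| = 3/2 := by norm_num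
    rw [h32]
    have hbb : |ubar| ^ 2 ≤ TLi := by nlinarith [mul_le_mul hub hub (abs_nonneg ubar) hT]
    nlinarith [mul_le_mul_of_nonneg_left (mul_le_mul_of_nonneg_right hbb (abs_nonneg ux)) hθ]
  have hQ : |((2 * u * ubar + u ^ 2) / (a ^ 2 - ubar ^ 2))
            * (2 * ubar * ubarx ^ 2 + (3/2) * θ * ubar ^ 2 * ubarx)| ≤
      (8 + 6 * θ) / a ^ 2 * (TLi * |u|) := by
    rw [abs_mul, abs_div, abs_of_pos hd0]
    have hN : |2 * u * ubar + u ^ 2| ≤ 3 * TLi * |u| := by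
      refine (abs_add_le _ _).trans ?_
      rw [abs_mul, abs_mul, abs_pow]
      simp only [Nat.abs_ofNat]
      have : |u| * |u| ≤ TLi * |u| := mul_le_mul_of_nonneg_right hu (abs_nonneg u)
      nlinarith [abs_nonneg u, abs_nonneg ubar]
    have hM : |2 * ubar * ubarx ^ 2 + (3/2) * θ * ubar ^ 2 * ubarx| ≤ (2 + 3/2 * θ) * TLi := by
      have e1 : |2 * ubar * ubarx ^ 2| = 2 * |ubar| * |ubarx| ^ 2 := by
        rw [abs_mul, abs_mul, abs_pow]; norm_num
      have e2 : |3/2 * θ * ubar ^ 2 * ubarx| = 3/2 * θ * |ubar| ^ 2 * |ubarx| := by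
        rw [abs_mul, abs_mul, abs_mul, abs_pow, abs_of_nonneg hθ]; norm_num
      refine (abs_add_le _ _).trans ?_
      rw [e1, e2]
      have hb2 : |ubar| * |ubar| ≤ TLi * TLi := mul_le_mul hub hub (abs_nonneg _) hT
      have hx2 : |ubarx| * |ubarx| ≤ TLi * TLi := mul_le_mul hubx hubx (abs_nonneg _) hT
      nlinarith [abs_nonneg ubar, abs_nonneg ubarx, mul_nonneg hT hT,
        mul_le_mul hub (le_trans hx2 hT2) (mul_nonneg (abs_nonneg ubarx) (abs_nonneg ubarx)) hT,
        mul_le_mul (le_trans hb2 hT2) hubx (abs_nonneg ubarx) hT, hθ]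
    calc |2 * u * ubar + u ^ 2| / (a ^ 2 - ubar ^ 2) *
          |2 * ubar * ubarx ^ 2 + (3/2) * θ * ubar ^ 2 * ubarx|
        ≤ (3 * TLi * |u|) / (3/4 * a^2) * ((2 + 3/2 * θ) * TLi) := by
          gcongr <;> positivity
      _ ≤ (8 + 6 * θ) / a ^ 2 * (TLi * |u|) := by
          rw [div_mul_eq_mul_div, div_le_iff₀ (by positivity : (0:ℝ) < 3/4 * a^2)]
          have ha2 : (8 + 6 * θ) / a ^ 2 * (TLi * |u|) * (3/4 * a^2) =
              3/4 * (8 + 6 * θ) * (TLi * |u|) := by field_simp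
          rw [ha2]
          nlinarith [mul_nonneg (abs_nonneg u) (sub_nonneg.mpr hT2),
            mul_nonneg hθ (mul_nonneg (abs_nonneg u) (sub_nonneg.mpr hT2))]
  set t1 := -2 * ut * (ux + ubarx)
  set t2 := θ * (u + ubar) * ut
  set t3 := 2 * u * (ux + ubarx) ^ 2
  set t4 := 4 * ubar * ubarx * ux
  set t5 := 2 * ubar * ux ^ 2
  set t6 := (3/2) * θ * u * (u + 2 * ubar) * (ux + ubarx)
  set t7 := (3/2) * θ * ubar ^ 2 * ux
  set t8 := ((2 * u * ubar + u ^ 2) / (a ^ 2 - ubar ^ 2))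
            * (2 * ubar * ubarx ^ 2 + (3/2) * θ * ubar ^ 2 * ubarx)
  have tri : |t1 - t2 - t3 - t4 - t5 - t6 - t7 - t8| ≤
      |t1| + |t2| + |t3| + |t4| + |t5| + |t6| + |t7| + |t8| := by
    calc |t1 - t2 - t3 - t4 - t5 - t6 - t7 - t8|
        ≤ |t1 - t2 - t3 - t4 - t5 - t6 - t7| + |t8| := hsub _ _
      _ ≤ (|t1 - t2 - t3 - t4 - t5 - t6| + |t7|) + |t8| := by
          linarith [hsub (t1 - t2 - t3 - t4 - t5 - t6) t7]
      _ ≤ ((|t1 - t2 - t3 - t4 - t5| + |t6|) + |t7|) + |t8| := by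
          linarith [hsub (t1 - t2 - t3 - t4 - t5) t6]
      _ ≤ (((|t1 - t2 - t3 - t4| + |t5|) + |t6|) + |t7|) + |t8| := by
          linarith [hsub (t1 - t2 - t3 - t4) t5]
      _ ≤ ((((|t1 - t2 - t3| + |t4|) + |t5|) + |t6|) + |t7|) + |t8| := by
          linarith [hsub (t1 - t2 - t3) t4]
      _ ≤ (((((|t1 - t2| + |t3|) + |t4|) + |t5|) + |t6|) + |t7|) + |t8| := by
          linarith [hsub (t1 - t2) t3]
      _ ≤ ((((((|t1| + |t2|) + |t3|) + |t4|) + |t5|) + |t6|) + |t7|) + |t8| := by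
          linarith [hsub t1 t2]
      _ = |t1| + |t2| + |t3| + |t4| + |t5| + |t6| + |t7| + |t8| := by ring
  have hq0 : (0:ℝ) ≤ (8 + 6 * θ) / a ^ 2 := by positivity
  have hmu : (0:ℝ) ≤ TLi * |u| := mul_nonneg hT (abs_nonneg u)
  have hmx : (0:ℝ) ≤ TLi * |ux| := mul_nonneg hT (abs_nonneg ux)
  have hmt : (0:ℝ) ≤ TLi * |ut| := mul_nonneg hT (abs_nonneg ut)
  have hrhs : (18 + 13 * θ + (8 + 6 * θ) / a ^ 2) * TLi * (|u| + |ux| + |ut|) =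
      (18 + 13 * θ) * (TLi * |u|) + (18 + 13 * θ) * (TLi * |ux|) + (18 + 13 * θ) * (TLi * |ut|)
      + (8 + 6 * θ) / a ^ 2 * (TLi * |u|) + (8 + 6 * θ) / a ^ 2 * (TLi * |ux|)
      + (8 + 6 * θ) / a ^ 2 * (TLi * |ut|) := by ring
  rw [hrhs]
  linarith [tri, h1, h2, h3, h4, h5, h6, h7, hQ, mul_nonneg hq0 hmx, mul_nonneg hq0 hmt,
    mul_nonneg hθ hmu, mul_nonneg hθ hmx, mul_nonneg hθ hmt, hmu, hmx, hmt]
end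

section
/- Let a > 0, k > 0 satisfy k ≥ max{1, (4/3)(1/a + 1/a²)}, so that k·e > 1 and 1 − k·e·(3/4)·a² ≤ 0. Suppose 0 ≤ w(x) ≤ a/2 on [0,L]. Then I₁ := −(1/L)·∫₀ᴸ exp(−x/L)·[(a² − w²)·q² + p²] dx ≤ −(1/(2·e·L·k))·E₁, where E₁ = ∫₀ᴸ [k·((a² − w²)·q² + p²) − 2·exp(−x/L)·(w·q² + p·q)] dx. -/
open Real Set

set_option maxHeartbeats 1000000

theorem I1_bound (a L k : ℝ) (ha : 0 < a) (hL : 0 < L) (hk : 0 < k)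
    (hkge : k ≥ max 1 ((4/3) * (1/a + 1/a^2)))
    (w p q : ℝ → ℝ) (hw : ∀ x ∈ Icc (0:ℝ) L, 0 ≤ w x ∧ w x ≤ a / 2)
    (hwc : Continuous w) (hpc : Continuous p) (hqc : Continuous q) :
    -(1/L) * ∫ x in (0:ℝ)..L,
        Real.exp (-x / L) * ((a ^ 2 - w x ^ 2) * q x ^ 2 + p x ^ 2) ≤
      -(1 / (2 * Real.exp 1 * L * k)) * ∫ x in (0:ℝ)..L,
        (k * ((a ^ 2 - w x ^ 2) * q x ^ 2 + p x ^ 2)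
          - 2 * Real.exp (-x / L) * (w x * q x ^ 2 + p x * q x)) := by
  have he : (0:ℝ) < Real.exp 1 := Real.exp_pos 1
  have hk1 : (1:ℝ) ≤ k := le_trans (le_max_left _ _) hkge
  have hka : (4/3) * (1/a + 1/a^2) ≤ k := le_trans (le_max_right _ _) hkge
  set f : ℝ → ℝ := fun x =>
    Real.exp (-x / L) * ((a ^ 2 - w x ^ 2) * q x ^ 2 + p x ^ 2) with hf
  set g : ℝ → ℝ := fun x =>
    k * ((a ^ 2 - w x ^ 2) * q x ^ 2 + p x ^ 2)
      - 2 * Real.exp (-x / L) * (w x * q x ^ 2 + p x * q x) with hg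
  have hec : Continuous (fun x : ℝ => Real.exp (-x / L)) :=
    Real.continuous_exp.comp (continuous_neg.div_const L)
  have hAc : Continuous (fun x => (a ^ 2 - w x ^ 2) * q x ^ 2 + p x ^ 2) :=
    ((continuous_const.sub (hwc.pow 2)).mul (hqc.pow 2)).add (hpc.pow 2)
  have hfc : Continuous f := hec.mul hAc
  have hgc : Continuous g :=
    (continuous_const.mul hAc).sub ((continuous_const.mul hec).mul
      ((hwc.mul (hqc.pow 2)).add (hpc.mul hqc)))
  -- key: k * a^2 >= 4/3
  have hka2 : 4/3 ≤ k * a ^ 2 := by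
    have h1 : (4/3) * (1/a^2) ≤ k := by
      have : (0:ℝ) ≤ 1/a := by positivity
      nlinarith
    have ha2 : (0:ℝ) < a ^ 2 := by positivity
    calc (4:ℝ)/3 = (4/3) * (1/a^2) * a^2 := by field_simp
    _ ≤ k * a ^ 2 := by nlinarith
  have hpt : ∀ x ∈ Icc (0:ℝ) L, g x ≤ 2 * Real.exp 1 * k * f x := by
    intro x hx
    obtain ⟨hw0, hwa⟩ := hw x hx
    set s := Real.exp (-x / L) with hs
    have hs0 : 0 < s := Real.exp_pos _
    have hs1 : s ≤ 1 := by
      apply Real.exp_le_one_iff.mpr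
      have h0x : 0 ≤ x := hx.1
      have : -x / L ≤ 0 := div_nonpos_of_nonpos_of_nonneg (by linarith) hL.le
      linarith
    have hs2 : 1 ≤ Real.exp 1 * s := by
      rw [← Real.exp_add]
      apply Real.one_le_exp
      have hxL : x ≤ L := hx.2
      have : -x / L ≥ -1 := by
        rw [ge_iff_le, neg_le, ← neg_div, neg_neg, div_le_one hL]
        linarith
      linarith
    have hw2 : w x ^ 2 ≤ a ^ 2 / 4 := by nlinarith
    have hsub : 0 ≤ a ^ 2 - w x ^ 2 := by nlinarith
    have hA : 0 ≤ (a ^ 2 - w x ^ 2) * q x ^ 2 + p x ^ 2 :=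
      add_nonneg (mul_nonneg hsub (sq_nonneg _)) (sq_nonneg _)
    have hkq : 0 ≤ k * (a ^ 2 - w x ^ 2) - 1 := by
      have h5 := mul_le_mul_of_nonneg_left hw2 hk.le
      have h6 : k * (a ^ 2 - w x ^ 2) = k * a ^ 2 - k * w x ^ 2 := by ring
      have h7 : k * (a ^ 2 / 4) = (k * a ^ 2) / 4 := by ring
      linarith
    have hkA : p x ^ 2 + q x ^ 2 ≤ k * ((a ^ 2 - w x ^ 2) * q x ^ 2 + p x ^ 2) := by
      have h8 := mul_nonneg hkq (sq_nonneg (q x))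
      have h9 := mul_nonneg (sub_nonneg.2 hk1) (sq_nonneg (p x))
      linarith [h8, h9]
    have t1 : 0 ≤ (Real.exp 1 * s - 1) * (k * ((a ^ 2 - w x ^ 2) * q x ^ 2 + p x ^ 2)) :=
      mul_nonneg (by linarith) (mul_nonneg hk.le hA)
    have t2 : 0 ≤ s * (p x + q x) ^ 2 := mul_nonneg hs0.le (sq_nonneg _)
    have t3 : 0 ≤ (1 - s) * (p x ^ 2 + q x ^ 2) := mul_nonneg (by linarith) (by positivity)
    have t4 : 0 ≤ s * (w x * q x ^ 2) := mul_nonneg hs0.le (mul_nonneg hw0 (sq_nonneg _))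
    show k * ((a ^ 2 - w x ^ 2) * q x ^ 2 + p x ^ 2)
        - 2 * s * (w x * q x ^ 2 + p x * q x)
      ≤ 2 * Real.exp 1 * k * (s * ((a ^ 2 - w x ^ 2) * q x ^ 2 + p x ^ 2))
    linarith [t1, t2, t3, t4, hkA]
  have hint : (∫ x in (0:ℝ)..L, g x) ≤ ∫ x in (0:ℝ)..L, 2 * Real.exp 1 * k * f x :=
    intervalIntegral.integral_mono_on hL.le
      (hgc.intervalIntegrable 0 L) ((continuous_const.mul hfc).intervalIntegrable _ _) hpt
  rw [intervalIntegral.integral_const_mul] at hint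
  have hcpos : (0:ℝ) < 2 * Real.exp 1 * L * k := by positivity
  rw [neg_mul, neg_mul, neg_le_neg_iff]
  rw [div_mul_eq_mul_div, div_mul_eq_mul_div, one_mul, one_mul,
    div_le_div_iff₀ hcpos hL]
  calc (∫ x in (0:ℝ)..L, g x) * L
      ≤ (2 * Real.exp 1 * k * ∫ x in (0:ℝ)..L, f x) * L :=
        mul_le_mul_of_nonneg_right hint hL.le
    _ = (∫ x in (0:ℝ)..L, f x) * (2 * Real.exp 1 * L * k) := by ring
end
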